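/- Let (S,Σ) be a scaled Cu-semigroup such that S satisfies axiom (O6), and assume that (S,Σ) has property (C_n) for some n ≥ 1, i.e. x ≤ n·y for all x, y ∈ Σ with y ≠ 0. Then S is simple: the only ideals of S are {0} and S. -/

import Mathlib

/-!
STATEMENT 17: Let (S,Σ) be a scaled Cu-semigroup such that S satisfies axiom (O6),
and assume that (S,Σ) has property (C_n) for some n ≥ 1, i.e. x ≤ n·y for all
x, y ∈ Σ with y ≠ 0.  Then S is simple: the only ideals of S are {0} and S.
-/

universe u v w

/-- `x` is *way below* `y` (sequential compact containment `x ≪ y`). -/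
def WayBelow {M : Type u} [Preorder M] (x y : M) : Prop :=
  ∀ s : ℕ → M, Monotone s → ∀ a : M, IsLUB (Set.range s) a → y ≤ a → ∃ n, x ≤ s n

theorem WayBelow.le {M : Type u} [Preorder M] {x y : M} (h : WayBelow x y) : x ≤ y := by
  obtain ⟨n, hn⟩ := h (fun _ => y) monotone_const y (by simp [Set.range_const]) le_rfl
  exact hn

theorem WayBelow.mono {M : Type u} [Preorder M] {x' x y y' : M} (h : WayBelow x y)
    (hx : x' ≤ x) (hy : y ≤ y') : WayBelow x' y' := fun s hs a ha hya => by
  obtain ⟨n, hn⟩ := h s hs a ha (hy.trans hya)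
  exact ⟨n, hx.trans hn⟩

theorem WayBelow.trans {M : Type u} [Preorder M] {x y z : M} (h : WayBelow x y)
    (h' : WayBelow y z) : WayBelow x z := h'.mono h.le le_rfl

/-- A map preserves suprema of increasing sequences. -/
def PreservesSeqSup {M : Type u} {N : Type v} [Preorder M] [Preorder N] (f : M → N) : Prop :=
  ∀ s : ℕ → M, Monotone s → ∀ a : M, IsLUB (Set.range s) a →
    IsLUB (Set.range fun n => f (s n)) (f a)

/-- Axiom (O1): every increasing sequence has a supremum. -/
def SeqSupExists (M : Type u) [Preorder M] : Prop :=
  ∀ s : ℕ → M, Monotone s → ∃ a : M, IsLUB (Set.range s) a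

/-- Axiom (O4): suprema of increasing sequences are additive. -/
def SeqSupAdditive (M : Type u) [AddCommMonoid M] [Preorder M] : Prop :=
  ∀ s t : ℕ → M, Monotone s → Monotone t → ∀ a b : M,
    IsLUB (Set.range s) a → IsLUB (Set.range t) b →
    IsLUB (Set.range fun n => s n + t n) (a + b)

/-- The axioms of a positively ordered monoid: the partial order is translation
invariant and `0` is the least element. -/
structure PoMAxioms (M : Type u) [AddCommMonoid M] [PartialOrder M] : Prop where
  add_le_add_left : ∀ a b : M, a ≤ b → ∀ c : M, c + a ≤ c + b
  zero_le : ∀ a : M, 0 ≤ a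

/-- A `PoM`-morphism: preserves addition, order and `0`. -/
structure IsPoMHom {M : Type u} {N : Type v} [AddCommMonoid M] [PartialOrder M]
    [AddCommMonoid N] [PartialOrder N] (f : M → N) : Prop where
  map_zero : f 0 = 0
  map_add : ∀ x y : M, f (x + y) = f x + f y
  mono : Monotone f

/-- The axioms of an abstract Cuntz semigroup (`Cu`-semigroup). -/
structure CuAxioms (M : Type u) [AddCommMonoid M] [PartialOrder M] extends PoMAxioms M : Prop where
  O1 : SeqSupExists M
  O2 : ∀ x : M, ∃ s : ℕ → M, (∀ n, WayBelow (s n) (s (n + 1))) ∧ IsLUB (Set.range s) x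
  O3 : ∀ x' x y' y : M, WayBelow x' x → WayBelow y' y → WayBelow (x' + y') (x + y)
  O4 : SeqSupAdditive M

/-- A `Cu`-morphism: preserves addition, order, `0`, way-below, and suprema of
increasing sequences. -/
structure IsCuHom {M : Type u} {N : Type v} [AddCommMonoid M] [PartialOrder M]
    [AddCommMonoid N] [PartialOrder N] (f : M → N) extends IsPoMHom f : Prop where
  map_wayBelow : ∀ x y : M, WayBelow x y → WayBelow (f x) (f y)
  map_seqSup : PreservesSeqSup f

/-- An ideal of a `Cu`-semigroup: a downward hereditary submonoid that is closed
under suprema of increasing sequences. -/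
structure IsCuIdeal {M : Type u} [AddCommMonoid M] [PartialOrder M] (I : Set M) : Prop where
  zero_mem : (0 : M) ∈ I
  add_mem : ∀ x y : M, x ∈ I → y ∈ I → x + y ∈ I
  lower : ∀ x y : M, x ≤ y → y ∈ I → x ∈ I
  seqSup_mem : ∀ s : ℕ → M, Monotone s → (∀ n, s n ∈ I) → ∀ a : M, IsLUB (Set.range s) a → a ∈ I

/-- Axiom (O6) (almost algebraic order). -/
def O6ax (M : Type u) [AddCommMonoid M] [PartialOrder M] : Prop :=
  ∀ x' x y z : M, WayBelow x' x → x ≤ y + z →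
    ∃ e f : M, e ≤ x ∧ e ≤ y ∧ f ≤ x ∧ f ≤ z ∧ x' ≤ e + f

/-- A scale on a Cu-semigroup: a downward hereditary subset, closed under suprema of
increasing sequences, generating the semigroup as an ideal. -/
structure IsScale {M : Type u} [AddCommMonoid M] [PartialOrder M] (A : Set M) : Prop where
  lower : ∀ x y : M, x ≤ y → y ∈ A → x ∈ A
  seqSup_mem : ∀ s : ℕ → M, Monotone s → (∀ n, s n ∈ A) → ∀ a : M, IsLUB (Set.range s) a → a ∈ A
  generates : ∀ I : Set M, IsCuIdeal I → A ⊆ I → I = Set.univ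

/-!
If the ideal `I` contains some `y ≠ 0`, pick `0 ≠ y' ≪ y`. Since the scale generates `S`, the
element `y'` lies below a finite sum of elements of the scale, and (O6) lets us split a nonzero
element below a sum into pieces below the summands, so some nonzero `c ∈ I` lies below an
element of the scale, hence in the scale. Property (C_n) then puts the whole scale below
`n • c ∈ I`, and `I` is everything.
-/

section Preorder

variable {M : Type u} [Preorder M]

theorem monotone_of_wayBelow_succ {s : ℕ → M} (hs : ∀ k, WayBelow (s k) (s (k + 1))) :
    Monotone s :=
  monotone_nat_of_le_succ fun k => (hs k).le

theorem wayBelow_of_wayBelow_succ_of_isLUB {s : ℕ → M} (hs : ∀ k, WayBelow (s k) (s (k + 1)))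
    {x : M} (hx : IsLUB (Set.range s) x) (k : ℕ) : WayBelow (s k) x :=
  (hs k).mono le_rfl (hx.1 ⟨k + 1, rfl⟩)

end Preorder

variable {M : Type u} [AddCommMonoid M] [PartialOrder M]

theorem PoMAxioms.add_le_add (hM : PoMAxioms M) {a b c d : M} (hab : a ≤ b) (hcd : c ≤ d) :
    a + c ≤ b + d :=
  calc a + c = c + a := add_comm a c
    _ ≤ c + b := hM.add_le_add_left a b hab c
    _ = b + c := add_comm c b
    _ ≤ b + d := hM.add_le_add_left c d hcd b

theorem PoMAxioms.eq_zero_of_le_zero (hM : PoMAxioms M) {x : M} (hx : x ≤ 0) : x = 0 :=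
  le_antisymm hx (hM.zero_le x)

namespace CuAxioms

theorem exists_wayBelow_ne_zero (hM : CuAxioms M) {x : M} (hx : x ≠ 0) :
    ∃ x', WayBelow x' x ∧ x' ≠ 0 := by
  obtain ⟨s, hs, hsup⟩ := hM.O2 x
  by_contra! h
  refine hx (hM.eq_zero_of_le_zero (hsup.2 ?_))
  rintro _ ⟨k, rfl⟩
  exact (h (s k) (wayBelow_of_wayBelow_succ_of_isLUB hs hsup k)).le

theorem exists_wayBelow_wayBelow (hM : CuAxioms M) {w x : M} (hw : WayBelow w x) :
    ∃ v, WayBelow w v ∧ WayBelow v x := by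
  obtain ⟨s, hs, hsup⟩ := hM.O2 x
  obtain ⟨k, hk⟩ := hw s (monotone_of_wayBelow_succ hs) x hsup le_rfl
  exact ⟨s (k + 1), (hs k).mono hk le_rfl, wayBelow_of_wayBelow_succ_of_isLUB hs hsup (k + 1)⟩

theorem exists_wayBelow_add (hM : CuAxioms M) {w x y : M} (hw : WayBelow w (x + y)) :
    ∃ x', WayBelow x' x ∧ ∃ y', WayBelow y' y ∧ w ≤ x' + y' := by
  obtain ⟨s, hs, hsx⟩ := hM.O2 x
  obtain ⟨t, ht, hty⟩ := hM.O2 y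
  have hsm := monotone_of_wayBelow_succ hs
  have htm := monotone_of_wayBelow_succ ht
  obtain ⟨k, hk⟩ := hw (fun m => s m + t m) (fun i j hij => hM.add_le_add (hsm hij) (htm hij))
    (x + y) (hM.O4 s t hsm htm x y hsx hty) le_rfl
  exact ⟨s k, wayBelow_of_wayBelow_succ_of_isLUB hs hsx k,
    t k, wayBelow_of_wayBelow_succ_of_isLUB ht hty k, hk⟩

theorem isCuIdeal_setOf_wayBelow_imp_le_closure (hM : CuAxioms M) (A : Set M) :
    IsCuIdeal {x : M | ∀ w, WayBelow w x → ∃ a ∈ AddSubmonoid.closure A, w ≤ a} where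
  zero_mem w hw := ⟨0, zero_mem _, hw.le⟩
  add_mem x y hx hy w hw := by
    obtain ⟨x', hx', y', hy', hw⟩ := hM.exists_wayBelow_add hw
    obtain ⟨a, ha, hxa⟩ := hx x' hx'
    obtain ⟨b, hb, hyb⟩ := hy y' hy'
    exact ⟨a + b, add_mem ha hb, hw.trans (hM.add_le_add hxa hyb)⟩
  lower x y hxy hy w hw := hy w (hw.mono le_rfl hxy)
  seqSup_mem s hs hmem a ha w hw := by
    obtain ⟨v, hwv, hva⟩ := hM.exists_wayBelow_wayBelow hw
    obtain ⟨k, hk⟩ := hva s hs a ha le_rfl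
    exact hmem k w (hwv.mono le_rfl hk)

theorem exists_le_closure_of_wayBelow (hM : CuAxioms M) {A : Set M} (hA : IsScale A) {w x : M}
    (hw : WayBelow w x) : ∃ a ∈ AddSubmonoid.closure A, w ≤ a := by
  have hJ := hA.generates _ (hM.isCuIdeal_setOf_wayBelow_imp_le_closure A)
    fun a ha _ hw => ⟨a, AddSubmonoid.subset_closure ha, hw.le⟩
  rw [Set.eq_univ_iff_forall] at hJ
  exact hJ x w hw

theorem exists_mem_le_of_le_closure (hM : CuAxioms M) (hO6 : O6ax M) {A : Set M}
    (hA : IsLowerSet A) {a : M} (ha : a ∈ AddSubmonoid.closure A) :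
    ∀ z : M, z ≠ 0 → z ≤ a → ∃ c ∈ A, c ≠ 0 ∧ c ≤ z := by
  induction ha using AddSubmonoid.closure_induction with
  | mem a ha => exact fun z hz hza => ⟨z, hA hza ha, hz, le_rfl⟩
  | zero => exact fun z hz hz0 => absurd (hM.eq_zero_of_le_zero hz0) hz
  | add a b _ _ iha ihb =>
    intro z hz hzab
    obtain ⟨z', hz'z, hz'⟩ := hM.exists_wayBelow_ne_zero hz
    obtain ⟨e, f, hez, hea, hfz, hfb, hz'ef⟩ := hO6 z' z a b hz'z hzab
    by_cases he : e = 0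
    · have hf : f ≠ 0 := by
        rintro rfl
        exact hz' (hM.eq_zero_of_le_zero (by simpa [he] using hz'ef))
      obtain ⟨c, hcA, hc, hcf⟩ := ihb f hf hfb
      exact ⟨c, hcA, hc, hcf.trans hfz⟩
    · obtain ⟨c, hcA, hc, hce⟩ := iha e he hea
      exact ⟨c, hcA, hc, hce.trans hez⟩

theorem exists_mem_scale_inter_ne_zero (hM : CuAxioms M) (hO6 : O6ax M) {A I : Set M}
    (hA : IsScale A) (hI : IsCuIdeal I) {y : M} (hyI : y ∈ I) (hy : y ≠ 0) :
    ∃ c ∈ A, c ∈ I ∧ c ≠ 0 := by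
  obtain ⟨y', hy'y, hy'⟩ := hM.exists_wayBelow_ne_zero hy
  obtain ⟨a, ha, hy'a⟩ := hM.exists_le_closure_of_wayBelow hA hy'y
  obtain ⟨c, hcA, hc, hcy'⟩ :=
    hM.exists_mem_le_of_le_closure hO6 (fun _ _ h hx => hA.lower _ _ h hx) ha y' hy' hy'a
  exact ⟨c, hcA, hI.lower c y (hcy'.trans hy'y.le) hyI, hc⟩

end CuAxioms

theorem IsCuIdeal.nsmul_mem {I : Set M} (hI : IsCuIdeal I) {c : M} (hc : c ∈ I) (n : ℕ) :
    n • c ∈ I := by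
  induction n with
  | zero => simpa using hI.zero_mem
  | succ k ih => simpa [succ_nsmul] using hI.add_mem _ _ ih hc

theorem simple_of_propCn_general {M : Type u} [AddCommMonoid M] [PartialOrder M]
    (hM : CuAxioms M) (A : Set M) (hA : IsScale A) (hO6 : O6ax M)
    (n : ℕ) (hC : ∀ x ∈ A, ∀ y ∈ A, y ≠ 0 → x ≤ n • y) :
    ∀ I : Set M, IsCuIdeal I → I = {0} ∨ I = Set.univ := by
  intro I hI
  by_cases h0 : ∀ y ∈ I, y = 0
  · exact Or.inl (Set.eq_singleton_iff_unique_mem.2 ⟨hI.zero_mem, h0⟩)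
  · obtain ⟨y, hyI, hy⟩ := not_forall₂.1 h0
    obtain ⟨c, hcA, hcI, hc⟩ := hM.exists_mem_scale_inter_ne_zero hO6 hA hI hyI hy
    exact Or.inr (hA.generates I hI fun x hx =>
      hI.lower x (n • c) (hC x hx c hcA hc) (hI.nsmul_mem hcI n))

/-- **Lemma: (C_n) together with (O6) implies simplicity.**  If the scaled
Cu-semigroup `(M, A)` satisfies (O6) and has property (C_n) for some `n ≥ 1`, then
`M` is simple: its only ideals are `{0}` and `M`. -/
theorem simple_of_propCn {M : Type u} [AddCommMonoid M] [PartialOrder M]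
    (hM : CuAxioms M) (A : Set M) (hA : IsScale A) (hO6 : O6ax M)
    (n : ℕ) (hn : 1 ≤ n) (hC : ∀ x ∈ A, ∀ y ∈ A, y ≠ 0 → x ≤ n • y) :
    ∀ I : Set M, IsCuIdeal I → I = {0} ∨ I = Set.univ :=
  simple_of_propCn_general hM A hA hO6 n hC
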